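/- Let β > 0 and a > 0 with βa > 8/3. Consider the quadratic form t⁺[f] = ∫_{-a}^{a} |f'(u)|² du - β|f(0)|² on H¹₀((-a,a)). Then the associated self-adjoint operator T⁺ has exactly one negative eigenvalue ζ, and it satisfies -β²/4 < ζ < -β²/4 + 2β² exp(-βa/2). -/

import Mathlib

/-- `ζ` is an eigenvalue of the operator T⁺ = -d²/du² on (-a,a) with Dirichlet
boundary conditions at ±a and an attractive δ-interaction of strength β at 0:
there is a nontrivial eigenfunction f, smooth away from 0, with
-f'' = ζ f on (-a,0)∪(0,a), f(±a) = 0, and derivative jump f'(0⁺) - f'(0⁻) = -β f(0). -/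
def IsDirichletDeltaEigenvalue (a β ζ : ℝ) : Prop :=
  ∃ f fd : ℝ → ℝ,
    ContinuousOn f (Set.Icc (-a) a) ∧
    (∃ x ∈ Set.Icc (-a) a, f x ≠ 0) ∧
    f (-a) = 0 ∧ f a = 0 ∧
    (∀ x ∈ Set.Ioo (-a) a, x ≠ 0 → HasDerivAt f (fd x) x) ∧
    (∀ x ∈ Set.Ioo (-a) a, x ≠ 0 → HasDerivAt fd (-(ζ * f x)) x) ∧
    (∃ dp dm : ℝ,
      HasDerivWithinAt f dp (Set.Ici 0) 0 ∧ HasDerivWithinAt f dm (Set.Iic 0) 0 ∧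
      dp - dm = -(β * f 0))

open Set Filter Topology

/-- constancy on open interval from zero derivative -/
lemma const_of_deriv_zero {g : ℝ → ℝ} {s t : ℝ}
    (h : ∀ x ∈ Ioo s t, HasDerivAt g 0 x) :
    ∀ x ∈ Ioo s t, ∀ y ∈ Ioo s t, g x = g y := by
  have key : ∀ x ∈ Ioo s t, ∀ y ∈ Ioo s t, x < y → g x = g y := by
    intro x hx y hy hxy
    have hsub : Icc x y ⊆ Ioo s t := fun z hz => ⟨lt_of_lt_of_le hx.1 hz.1, lt_of_le_of_lt hz.2 hy.2⟩
    have hcont : ContinuousOn g (Icc x y) := fun z hz =>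
      ((h z (hsub hz)).continuousAt).continuousWithinAt
    obtain ⟨c, _, hc⟩ := exists_hasDerivAt_eq_slope g (fun _ => 0) hxy hcont
      (fun z hz => h z (hsub ⟨le_of_lt hz.1, le_of_lt hz.2⟩))
    have hne : y - x ≠ 0 := by linarith
    have : g y - g x = 0 := by
      field_simp at hc
      linarith [hc]
    linarith
  intro x hx y hy
  rcases lt_trichotomy x y with hlt | heq | hgt
  · exact key x hx y hy hlt
  · rw [heq]
  · exact (key y hy x hx hgt).symm

/-- If f is continuous from the right at p, agrees with continuous g on (p,q), then f p = g p. -/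
lemma eq_at_left_endpoint {f g : ℝ → ℝ} {p q : ℝ} (hpq : p < q)
    (hf : ContinuousWithinAt f (Ioo p q) p) (hg : Continuous g)
    (heq : ∀ x ∈ Ioo p q, f x = g x) : f p = g p := by
  haveI := left_nhdsWithin_Ioo_neBot hpq
  have h1 : Tendsto f (𝓝[Ioo p q] p) (𝓝 (f p)) := hf
  have h2 : Tendsto f (𝓝[Ioo p q] p) (𝓝 (g p)) := by
    refine Tendsto.congr' ?_ ((hg.tendsto p).mono_left nhdsWithin_le_nhds)
    filter_upwards [self_mem_nhdsWithin] with x hx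
    exact (heq x hx).symm
  exact tendsto_nhds_unique h1 h2

/-- Same from the left at q. -/
lemma eq_at_right_endpoint {f g : ℝ → ℝ} {p q : ℝ} (hpq : p < q)
    (hf : ContinuousWithinAt f (Ioo p q) q) (hg : Continuous g)
    (heq : ∀ x ∈ Ioo p q, f x = g x) : f q = g q := by
  haveI := right_nhdsWithin_Ioo_neBot hpq
  have h1 : Tendsto f (𝓝[Ioo p q] q) (𝓝 (f q)) := hf
  have h2 : Tendsto f (𝓝[Ioo p q] q) (𝓝 (g q)) := by
    refine Tendsto.congr' ?_ ((hg.tendsto q).mono_left nhdsWithin_le_nhds)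
    filter_upwards [self_mem_nhdsWithin] with x hx
    exact (heq x hx).symm
  exact tendsto_nhds_unique h1 h2

/-- uniqueness of one-sided derivative given agreement with a differentiable function on Icc -/
lemma derivWithin_unique_Icc {f g : ℝ → ℝ} {p q d d' : ℝ} (hpq : p < q)
    (hd : HasDerivWithinAt f d (Icc p q) p) (hg : HasDerivAt g d' p)
    (heq : ∀ x ∈ Icc p q, f x = g x) : d = d' := by
  have hu : UniqueDiffWithinAt ℝ (Icc p q) p := (uniqueDiffOn_Icc hpq) p ⟨le_refl _, le_of_lt hpq⟩
  have h2 : HasDerivWithinAt g d (Icc p q) p := hd.congr (fun x hx => (heq x hx).symm) ((heq p ⟨le_refl _, le_of_lt hpq⟩).symm)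
  have h3 : HasDerivWithinAt g d' (Icc p q) p := hg.hasDerivWithinAt
  have := UniqueDiffWithinAt.eq hu h2.hasFDerivWithinAt h3.hasFDerivWithinAt
  simpa using congrArg (fun L => L 1) this

lemma derivWithin_unique_Icc' {f g : ℝ → ℝ} {p q d d' : ℝ} (hpq : p < q)
    (hd : HasDerivWithinAt f d (Icc p q) q) (hg : HasDerivAt g d' q)
    (heq : ∀ x ∈ Icc p q, f x = g x) : d = d' := by
  have hu : UniqueDiffWithinAt ℝ (Icc p q) q := (uniqueDiffOn_Icc hpq) q ⟨le_of_lt hpq, le_refl _⟩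
  have h2 : HasDerivWithinAt g d (Icc p q) q := hd.congr (fun x hx => (heq x hx).symm) ((heq q ⟨le_of_lt hpq, le_refl _⟩).symm)
  have h3 : HasDerivWithinAt g d' (Icc p q) q := hg.hasDerivWithinAt
  have := UniqueDiffWithinAt.eq hu h2.hasFDerivWithinAt h3.hasFDerivWithinAt
  simpa using congrArg (fun L => L 1) this

noncomputable def rho (a β κ : ℝ) : ℝ := Real.sinh (a*κ) / Real.cosh (a*κ) - 2*κ/β

lemma hasDerivAt_rho (a β κ : ℝ) :
    HasDerivAt (rho a β) (a / Real.cosh (a*κ)^2 - 2/β) κ := by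
  have hc : Real.cosh (a*κ) ≠ 0 := by positivity
  have h1 : HasDerivAt (fun x : ℝ => a * x) a κ := by
    simpa using (hasDerivAt_id κ).const_mul a
  have hs : HasDerivAt (fun x : ℝ => Real.sinh (a*x)) (Real.cosh (a*κ) * a) κ :=
    (Real.hasDerivAt_sinh (a*κ)).comp κ h1
  have hco : HasDerivAt (fun x : ℝ => Real.cosh (a*x)) (Real.sinh (a*κ) * a) κ :=
    (Real.hasDerivAt_cosh (a*κ)).comp κ h1
  have hdiv := hs.div hco hc
  have h2 : HasDerivAt (fun x : ℝ => 2*x/β) (2/β) κ := by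
    have : HasDerivAt (fun x : ℝ => x * (2/β)) (2/β) κ := by
      simpa using (hasDerivAt_id κ).mul_const (2/β)
    refine this.congr_deriv rfl |>.congr_of_eventuallyEq ?_
    filter_upwards with x; ring
  have := hdiv.sub h2
  have hsq := Real.cosh_sq_sub_sinh_sq (a*κ)
  have hnum : Real.cosh (a*κ) * a * Real.cosh (a*κ) - Real.sinh (a*κ) * (Real.sinh (a*κ) * a) = a := by
    linear_combination a * hsq
  rw [hnum] at this
  exact this

lemma exp_43_gt_3 : (3:ℝ) < Real.exp (4/3) := by
  have h1 : (1:ℝ) + 1/3 < Real.exp (1/3) := by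
    have := Real.add_one_lt_exp (x := (1:ℝ)/3) (by norm_num)
    linarith
  have h2 : Real.exp (4/3) = (Real.exp (1/3))^4 := by
    rw [← Real.exp_nat_mul]; norm_num
  have h3 : ((1:ℝ) + 1/3)^4 ≤ (Real.exp (1/3))^4 := by
    have h0 : (0:ℝ) ≤ 1 + 1/3 := by norm_num
    exact pow_le_pow_left₀ h0 (le_of_lt h1) 4
  have : ((1:ℝ) + 1/3)^4 = 256/81 := by norm_num
  rw [h2]; nlinarith

/-- strict antitonicity of the derivative of rho on positives -/
lemma rho_deriv_strictAnti {a β : ℝ} (ha : 0 < a) {x y : ℝ} (hx : 0 ≤ x) (hxy : x < y) :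
    a / Real.cosh (a*y)^2 - 2/β < a / Real.cosh (a*x)^2 - 2/β := by
  have hcx : 0 < Real.cosh (a*x) := Real.cosh_pos _
  have hcy : 0 < Real.cosh (a*y) := Real.cosh_pos _
  have hlt : Real.cosh (a*x) < Real.cosh (a*y) := by
    rw [Real.cosh_lt_cosh]
    rw [abs_of_nonneg (mul_nonneg ha.le hx), abs_of_nonneg (mul_nonneg ha.le (hx.trans hxy.le))]
    exact mul_lt_mul_of_pos_left hxy ha
  have : Real.cosh (a*x)^2 < Real.cosh (a*y)^2 := by nlinarith
  have := div_lt_div_of_pos_left ha (by positivity) this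
  linarith

lemma rho_root_unique {a β : ℝ} (ha : 0 < a) (hβ : 0 < β) {κ1 κ2 : ℝ}
    (h1 : 0 < κ1) (h2 : 0 < κ2) (r1 : rho a β κ1 = 0) (r2 : rho a β κ2 = 0) : κ1 = κ2 := by
  -- auxiliary: between two roots (including 0) there is a critical point
  have key : ∀ x y : ℝ, 0 ≤ x → x < y → rho a β x = 0 → rho a β y = 0 →
      ∃ c, x < c ∧ c < y ∧ a / Real.cosh (a*c)^2 - 2/β = 0 := by
    intro x y hx hxy rx ry
    have hcont : ContinuousOn (rho a β) (Icc x y) := fun z _ =>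
      ((hasDerivAt_rho a β z).continuousAt).continuousWithinAt
    obtain ⟨c, hc, hslope⟩ := exists_hasDerivAt_eq_slope (rho a β)
      (fun z => a / Real.cosh (a*z)^2 - 2/β) hxy hcont (fun z _ => hasDerivAt_rho a β z)
    refine ⟨c, hc.1, hc.2, ?_⟩
    rw [rx, ry] at hslope
    simpa using hslope
  have hrho0 : rho a β 0 = 0 := by simp [rho]
  wlog hlt : κ1 < κ2 generalizing κ1 κ2
  · rcases eq_or_lt_of_le (not_lt.mp hlt) with h | h
    · exact h.symm
    · exact (this h2 h1 r2 r1 h).symm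
  obtain ⟨c1, hc10, hc11, e1⟩ := key 0 κ1 (le_refl 0) h1 hrho0 r1
  obtain ⟨c2, hc21, hc22, e2⟩ := key κ1 κ2 (le_of_lt h1) hlt r1 r2
  have : c1 < c2 := lt_trans hc11 hc21
  have := rho_deriv_strictAnti (β := β) ha (le_of_lt hc10) this
  rw [e1, e2] at this
  exact absurd this (lt_irrefl 0)

lemma rho_root_exists {a β : ℝ} (ha : 0 < a) (hβ : 0 < β) (hβa : 8/3 < β * a) :
    ∃ κ ∈ Ioo (β/4) (β/2), rho a β κ = 0 := by
  have hcont : ContinuousOn (rho a β) (Icc (β/4) (β/2)) := fun z _ =>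
    ((hasDerivAt_rho a β z).continuousAt).continuousWithinAt
  have hle : β/4 ≤ β/2 := by linarith
  -- rho (β/4) > 0
  have hpos : 0 < rho a β (β/4) := by
    have hs : (2:ℝ)/3 < a * (β/4) := by nlinarith
    have hexp : (3:ℝ) < Real.exp (2 * (a * (β/4))) := by
      have : (4:ℝ)/3 < 2 * (a * (β/4)) := by linarith
      calc (3:ℝ) < Real.exp (4/3) := exp_43_gt_3
        _ < Real.exp (2 * (a * (β/4))) := Real.exp_lt_exp.mpr this
    -- sinh t / cosh t > 1/2 when e^{2t} > 3
    set t := a * (β/4) with ht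
    have hc : 0 < Real.cosh t := Real.cosh_pos _
    have h2 : 2 * Real.sinh t - Real.cosh t = (Real.exp t - 3 * Real.exp (-t)) / 2 := by
      rw [Real.sinh_eq, Real.cosh_eq]; ring
    have hexp' : 3 * Real.exp (-t) < Real.exp t := by
      have hE : 0 < Real.exp (-t) := Real.exp_pos _
      have : Real.exp (2*t) * Real.exp (-t) = Real.exp t := by
        rw [← Real.exp_add]; ring_nf
      nlinarith
    have htanh : 1/2 < Real.sinh t / Real.cosh t := by
      rw [lt_div_iff₀ hc]; nlinarith
    have : rho a β (β/4) = Real.sinh t / Real.cosh t - 1/2 := by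
      simp only [rho, ht]
      field_simp
      ring
    rw [this]; linarith
  -- rho (β/2) < 0
  have hneg : rho a β (β/2) < 0 := by
    have hc : 0 < Real.cosh (a * (β/2)) := Real.cosh_pos _
    have hsc : Real.sinh (a * (β/2)) < Real.cosh (a * (β/2)) := by
      rw [Real.sinh_eq, Real.cosh_eq]
      have := Real.exp_pos (-(a * (β/2)))
      linarith
    have htanh : Real.sinh (a * (β/2)) / Real.cosh (a * (β/2)) < 1 :=
      (div_lt_one hc).mpr hsc
    have : rho a β (β/2) = Real.sinh (a * (β/2)) / Real.cosh (a * (β/2)) - 1 := by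
      simp only [rho]
      field_simp
    rw [this]; linarith
  have h0 : (0:ℝ) ∈ Ioo (rho a β (β/2)) (rho a β (β/4)) := ⟨hneg, hpos⟩
  have := intermediate_value_Ioo' hle hcont h0
  obtain ⟨κ, hκ, hκ0⟩ := this
  exact ⟨κ, hκ, hκ0⟩

lemma eig_of_root {a β κ : ℝ} (ha : 0 < a) (hκ : 0 < κ)
    (hroot : β * Real.sinh (κ*a) = 2*κ*Real.cosh (κ*a)) :
    IsDirichletDeltaEigenvalue a β (-κ^2) := by
  set f : ℝ → ℝ := fun x => Real.sinh (κ*(a - |x|)) with hf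
  set fd : ℝ → ℝ := fun x => if x ≤ 0 then κ * Real.cosh (κ*(a+x)) else -(κ * Real.cosh (κ*(a-x))) with hfd
  -- right model
  have hR : ∀ x : ℝ, HasDerivAt (fun y => Real.sinh (κ*(a - y))) (-(κ * Real.cosh (κ*(a-x)))) x := by
    intro x
    have hlin : HasDerivAt (fun y : ℝ => κ*(a-y)) (-κ) x := by
      simpa using ((hasDerivAt_id x).const_sub a).const_mul κ
    have := (Real.hasDerivAt_sinh (κ*(a-x))).comp x hlin
    exact this.congr_deriv (by ring)
  have hL : ∀ x : ℝ, HasDerivAt (fun y => Real.sinh (κ*(a + y))) (κ * Real.cosh (κ*(a+x))) x := by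
    intro x
    have hlin : HasDerivAt (fun y : ℝ => κ*(a+y)) κ x := by
      simpa using ((hasDerivAt_id x).const_add a).const_mul κ
    have := (Real.hasDerivAt_sinh (κ*(a+x))).comp x hlin
    exact this.congr_deriv (by ring)
  have hR2 : ∀ x : ℝ, HasDerivAt (fun y => -(κ * Real.cosh (κ*(a-y)))) (κ^2 * Real.sinh (κ*(a-x))) x := by
    intro x
    have hlin : HasDerivAt (fun y : ℝ => κ*(a-y)) (-κ) x := by
      simpa using ((hasDerivAt_id x).const_sub a).const_mul κ
    have := (((Real.hasDerivAt_cosh (κ*(a-x))).comp x hlin).const_mul κ).neg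
    exact this.congr_deriv (by ring)
  have hL2 : ∀ x : ℝ, HasDerivAt (fun y => κ * Real.cosh (κ*(a+y))) (κ^2 * Real.sinh (κ*(a+x))) x := by
    intro x
    have hlin : HasDerivAt (fun y : ℝ => κ*(a+y)) κ x := by
      simpa using ((hasDerivAt_id x).const_add a).const_mul κ
    have := ((Real.hasDerivAt_cosh (κ*(a+x))).comp x hlin).const_mul κ
    exact this.congr_deriv (by ring)
  refine ⟨f, fd, ?_, ?_, ?_, ?_, ?_, ?_, ?_⟩
  · exact (Real.continuous_sinh.comp (continuous_const.mul (continuous_const.sub continuous_abs))).continuousOn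
  · refine ⟨0, ⟨by linarith, by linarith⟩, ?_⟩
    simp only [hf, abs_zero, sub_zero]
    exact ne_of_gt (by positivity)
  · simp [hf, abs_of_nonpos (by linarith : -a ≤ (0:ℝ))]
  · simp [hf, abs_of_nonneg ha.le]
  · intro x hx hx0
    rcases lt_or_gt_of_ne hx0 with hneg | hpos
    · have hev : f =ᶠ[nhds x] (fun y => Real.sinh (κ*(a + y))) := by
        filter_upwards [Iio_mem_nhds hneg] with y hy
        have h' : |y| = -y := abs_of_neg (mem_Iio.mp hy)
        simp [hf, h']
      have hfdx : fd x = κ * Real.cosh (κ*(a+x)) := by simp [hfd, le_of_lt hneg]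
      rw [hfdx]
      exact (hL x).congr_of_eventuallyEq hev
    · have hev : f =ᶠ[nhds x] (fun y => Real.sinh (κ*(a - y))) := by
        filter_upwards [Ioi_mem_nhds hpos] with y hy
        have h' : |y| = y := abs_of_pos (mem_Ioi.mp hy)
        simp [hf, h']
      have hfdx : fd x = -(κ * Real.cosh (κ*(a-x))) := by simp [hfd, not_le.mpr hpos]
      rw [hfdx]
      exact (hR x).congr_of_eventuallyEq hev
  · intro x hx hx0
    rcases lt_or_gt_of_ne hx0 with hneg | hpos
    · have hev : fd =ᶠ[nhds x] (fun y => κ * Real.cosh (κ*(a + y))) := by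
        filter_upwards [Iio_mem_nhds hneg] with y hy
        simp [hfd, le_of_lt (mem_Iio.mp hy)]
      have : -(-κ^2 * f x) = κ^2 * Real.sinh (κ*(a+x)) := by
        simp [hf, abs_of_neg hneg]
      rw [this]
      exact (hL2 x).congr_of_eventuallyEq hev
    · have hev : fd =ᶠ[nhds x] (fun y => -(κ * Real.cosh (κ*(a - y)))) := by
        filter_upwards [Ioi_mem_nhds hpos] with y hy
        simp [hfd, not_le.mpr (mem_Ioi.mp hy)]
      have : -(-κ^2 * f x) = κ^2 * Real.sinh (κ*(a-x)) := by
        simp [hf, abs_of_pos hpos]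
      rw [this]
      exact (hR2 x).congr_of_eventuallyEq hev
  · refine ⟨-(κ * Real.cosh (κ*a)), κ * Real.cosh (κ*a), ?_, ?_, ?_⟩
    · have h0 : HasDerivWithinAt (fun y => Real.sinh (κ*(a - y))) (-(κ * Real.cosh (κ*(a-0)))) (Ici 0) 0 :=
        (hR 0).hasDerivWithinAt
      have h1 : HasDerivWithinAt f (-(κ * Real.cosh (κ*(a-0)))) (Ici 0) 0 := by
        refine HasDerivWithinAt.congr h0 ?_ ?_
        · intro y hy; simp [hf, abs_of_nonneg (mem_Ici.mp hy)]
        · simp [hf]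
      simpa using h1
    · have h0 : HasDerivWithinAt (fun y => Real.sinh (κ*(a + y))) (κ * Real.cosh (κ*(a+0))) (Iic 0) 0 :=
        (hL 0).hasDerivWithinAt
      have h1 : HasDerivWithinAt f (κ * Real.cosh (κ*(a+0))) (Iic 0) 0 := by
        refine HasDerivWithinAt.congr h0 ?_ ?_
        · intro y hy
          simp [hf, abs_of_nonpos (mem_Iic.mp hy)]
        · simp [hf]
      simpa using h1
    · have : f 0 = Real.sinh (κ*a) := by simp [hf]
      rw [this]
      linarith [hroot]

set_option maxHeartbeats 1600000 in
lemma root_of_eig {a β ζ : ℝ} (ha : 0 < a) (hβ : 0 < β) (hζ : ζ < 0)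
    (h : IsDirichletDeltaEigenvalue a β ζ) :
    β * Real.sinh (Real.sqrt (-ζ) * a) = 2 * Real.sqrt (-ζ) * Real.cosh (Real.sqrt (-ζ) * a) := by
  set κ := Real.sqrt (-ζ) with hκdef
  have hκ : 0 < κ := Real.sqrt_pos.mpr (by linarith)
  have hζ2 : -ζ = κ^2 := (Real.sq_sqrt (by linarith : (0:ℝ) ≤ -ζ)).symm
  obtain ⟨f, fd, hcont, ⟨x0, hx0, hfx0⟩, hma, hpa, hD1, hD2, dp, dm, hdp, hdm, hjump⟩ := h
  -- exponential derivatives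
  have hkexpm : ∀ x : ℝ, HasDerivAt (fun y => Real.exp (-(κ*y))) (-κ * Real.exp (-(κ*x))) x := by
    intro x
    have hlin : HasDerivAt (fun y : ℝ => -(κ*y)) (-κ) x := by
      exact (((hasDerivAt_id x).const_mul κ).neg).congr_deriv (by simp)
    have := (Real.hasDerivAt_exp (-(κ*x))).comp x hlin
    exact this.congr_deriv (by ring)
  have hkexpp : ∀ x : ℝ, HasDerivAt (fun y => Real.exp (κ*y)) (κ * Real.exp (κ*x)) x := by
    intro x
    have hlin : HasDerivAt (fun y : ℝ => κ*y) κ x := by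
      simpa using ((hasDerivAt_id x).const_mul κ)
    have := (Real.hasDerivAt_exp (κ*x)).comp x hlin
    exact this.congr_deriv (by ring)
  set g1 : ℝ → ℝ := fun x => Real.exp (-(κ*x)) * (fd x + κ * f x) with hg1def
  set g2 : ℝ → ℝ := fun x => Real.exp (κ*x) * (fd x - κ * f x) with hg2def
  have hg1 : ∀ x ∈ Ioo (-a) a, x ≠ 0 → HasDerivAt g1 0 x := by
    intro x hx hx0
    have hsum : HasDerivAt (fun y => fd y + κ * f y) (-(ζ * f x) + κ * fd x) x :=
      (hD2 x hx hx0).add ((hD1 x hx hx0).const_mul κ)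
    have prod := (hkexpm x).mul hsum
    have hzero : -κ * Real.exp (-(κ*x)) * (fd x + κ * f x)
        + Real.exp (-(κ*x)) * (-(ζ * f x) + κ * fd x) = 0 := by
      have : -(ζ * f x) = κ^2 * f x := by linear_combination (f x) * hζ2
      rw [this]; ring
    rw [hzero] at prod
    exact prod
  have hg2 : ∀ x ∈ Ioo (-a) a, x ≠ 0 → HasDerivAt g2 0 x := by
    intro x hx hx0
    have hsum : HasDerivAt (fun y => fd y - κ * f y) (-(ζ * f x) - κ * fd x) x :=
      (hD2 x hx hx0).sub ((hD1 x hx hx0).const_mul κ)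
    have prod := (hkexpp x).mul hsum
    have hzero : κ * Real.exp (κ*x) * (fd x - κ * f x)
        + Real.exp (κ*x) * (-(ζ * f x) - κ * fd x) = 0 := by
      have : -(ζ * f x) = κ^2 * f x := by linear_combination (f x) * hζ2
      rw [this]; ring
    rw [hzero] at prod
    exact prod
  -- constants on the right interval
  have hsubR : Ioo (0:ℝ) a ⊆ Ioo (-a) a := fun z hz => ⟨by linarith [hz.1], hz.2⟩
  have hsubL : Ioo (-a) (0:ℝ) ⊆ Ioo (-a) a := fun z hz => ⟨hz.1, by linarith [hz.2]⟩
  have hmemR : a/2 ∈ Ioo (0:ℝ) a := ⟨by linarith, by linarith⟩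
  have hmemL : -(a/2) ∈ Ioo (-a) (0:ℝ) := ⟨by linarith, by linarith⟩
  set c1 := g1 (a/2) with hc1def
  set c2 := g2 (a/2) with hc2def
  set d1 := g1 (-(a/2)) with hd1def
  set d2 := g2 (-(a/2)) with hd2def
  have hconstR1 : ∀ x ∈ Ioo (0:ℝ) a, g1 x = c1 :=
    fun x hx => const_of_deriv_zero
      (fun z hz => hg1 z (hsubR hz) (ne_of_gt hz.1)) x hx (a/2) hmemR
  have hconstR2 : ∀ x ∈ Ioo (0:ℝ) a, g2 x = c2 :=
    fun x hx => const_of_deriv_zero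
      (fun z hz => hg2 z (hsubR hz) (ne_of_gt hz.1)) x hx (a/2) hmemR
  have hconstL1 : ∀ x ∈ Ioo (-a) (0:ℝ), g1 x = d1 :=
    fun x hx => const_of_deriv_zero
      (fun z hz => hg1 z (hsubL hz) (ne_of_lt hz.2)) x hx (-(a/2)) hmemL
  have hconstL2 : ∀ x ∈ Ioo (-a) (0:ℝ), g2 x = d2 :=
    fun x hx => const_of_deriv_zero
      (fun z hz => hg2 z (hsubL hz) (ne_of_lt hz.2)) x hx (-(a/2)) hmemL
  -- explicit solutions
  set F : ℝ → ℝ := fun x => (c1 * Real.exp (κ*x) - c2 * Real.exp (-(κ*x)))/(2*κ) with hFdef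
  set G : ℝ → ℝ := fun x => (d1 * Real.exp (κ*x) - d2 * Real.exp (-(κ*x)))/(2*κ) with hGdef
  have hexpmul : ∀ x : ℝ, Real.exp (κ*x) * Real.exp (-(κ*x)) = 1 := by
    intro x; rw [← Real.exp_add]; simp
  have hFf : ∀ x ∈ Ioo (0:ℝ) a, f x = F x := by
    intro x hx
    have e1 := hconstR1 x hx
    have e2 := hconstR2 x hx
    simp only [hg1def, hg2def] at e1 e2
    have hE := hexpmul x
    have hEp := Real.exp_pos (κ*x)
    simp only [hFdef]
    rw [eq_div_iff (by positivity : (2*κ) ≠ 0)]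
    linear_combination (Real.exp (κ*x)) * e1 - (Real.exp (-(κ*x))) * e2 - (2*κ*(f x)) * hE
  have hGf : ∀ x ∈ Ioo (-a) (0:ℝ), f x = G x := by
    intro x hx
    have e1 := hconstL1 x hx
    have e2 := hconstL2 x hx
    simp only [hg1def, hg2def] at e1 e2
    have hE := hexpmul x
    have hEp := Real.exp_pos (κ*x)
    simp only [hGdef]
    rw [eq_div_iff (by positivity : (2*κ) ≠ 0)]
    linear_combination (Real.exp (κ*x)) * e1 - (Real.exp (-(κ*x))) * e2 - (2*κ*(f x)) * hE
  have hFcont : Continuous F := by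
    simp only [hFdef]
    fun_prop
  have hGcont : Continuous G := by
    simp only [hGdef]
    fun_prop
  -- boundary values
  have hFa : F a = 0 := by
    have hcw : ContinuousWithinAt f (Ioo (0:ℝ) a) a :=
      (hcont a ⟨by linarith, le_refl a⟩).mono (fun z hz => ⟨by linarith [hz.1], le_of_lt hz.2⟩)
    have := eq_at_right_endpoint ha hcw hFcont hFf
    rw [hpa] at this; exact this.symm
  have hF0 : f 0 = F 0 := by
    have hcw : ContinuousWithinAt f (Ioo (0:ℝ) a) 0 :=
      (hcont 0 ⟨by linarith, by linarith⟩).mono (fun z hz => ⟨by linarith [hz.1], le_of_lt hz.2⟩)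
    exact eq_at_left_endpoint ha hcw hFcont hFf
  have hGa : G (-a) = 0 := by
    have hcw : ContinuousWithinAt f (Ioo (-a) (0:ℝ)) (-a) :=
      (hcont (-a) ⟨le_refl _, by linarith⟩).mono (fun z hz => ⟨le_of_lt hz.1, by linarith [hz.2]⟩)
    have := eq_at_left_endpoint (by linarith : -a < (0:ℝ)) hcw hGcont hGf
    rw [hma] at this; exact this.symm
  have hG0 : f 0 = G 0 := by
    have hcw : ContinuousWithinAt f (Ioo (-a) (0:ℝ)) 0 :=
      (hcont 0 ⟨by linarith, by linarith⟩).mono (fun z hz => ⟨le_of_lt hz.1, by linarith [hz.2]⟩)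
    exact eq_at_right_endpoint (by linarith : -a < (0:ℝ)) hcw hGcont hGf
  -- EqOn on closed intervals
  have hFIcc : ∀ x ∈ Icc (0:ℝ) a, f x = F x := by
    intro x hx
    rcases eq_or_lt_of_le hx.1 with h0 | h0
    · rw [← h0]; exact hF0
    rcases eq_or_lt_of_le hx.2 with h1 | h1
    · rw [h1, hpa, hFa]
    exact hFf x ⟨h0, h1⟩
  have hGIcc : ∀ x ∈ Icc (-a) (0:ℝ), f x = G x := by
    intro x hx
    rcases eq_or_lt_of_le hx.1 with h0 | h0
    · rw [← h0, hma, hGa]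
    rcases eq_or_lt_of_le hx.2 with h1 | h1
    · rw [h1]; exact hG0
    exact hGf x ⟨h0, h1⟩
  -- one-sided derivatives
  have hFderiv : HasDerivAt F ((c1 + c2)/2) 0 := by
    have h1 := (hkexpp 0).const_mul c1
    have h2 := (hkexpm 0).const_mul c2
    have := ((h1.sub h2).div_const (2*κ))
    simp only [mul_zero, neg_zero, Real.exp_zero, mul_one] at this
    refine this.congr_deriv ?_
    field_simp
    ring
  have hGderiv : HasDerivAt G ((d1 + d2)/2) 0 := by
    have h1 := (hkexpp 0).const_mul d1
    have h2 := (hkexpm 0).const_mul d2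
    have := ((h1.sub h2).div_const (2*κ))
    simp only [mul_zero, neg_zero, Real.exp_zero, mul_one] at this
    refine this.congr_deriv ?_
    field_simp
    ring
  have hdpval : dp = (c1 + c2)/2 :=
    derivWithin_unique_Icc ha (hdp.mono (fun z hz => hz.1)) hFderiv hFIcc
  have hdmval : dm = (d1 + d2)/2 :=
    derivWithin_unique_Icc' (by linarith : -a < (0:ℝ)) (hdm.mono (fun z hz => hz.2)) hGderiv hGIcc
  -- algebra
  have hκne2 : (2*κ) ≠ 0 := by positivity
  set E := Real.exp (κ*a) with hEdef
  have hEpos : 0 < E := Real.exp_pos _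
  have hE1 : 1 < E := by
    rw [hEdef]
    calc (1:ℝ) = Real.exp 0 := (Real.exp_zero).symm
      _ < Real.exp (κ*a) := Real.exp_lt_exp.mpr (by positivity)
  have hEne : E ≠ 0 := ne_of_gt hEpos
  have hEinv : Real.exp (-(κ*a)) = E⁻¹ := by
    rw [Real.exp_neg]
  have hEexp : Real.exp (κ*(-a)) = E⁻¹ := by
    rw [show κ*(-a) = -(κ*a) by ring, Real.exp_neg]
  -- Eq1 : c2 = c1 * E^2
  have heq1 : c2 = c1 * E^2 := by
    have h' : (c1 * E - c2 * E⁻¹)/(2*κ) = 0 := by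
      have := hFa
      simp only [hFdef] at this
      rw [hEinv] at this
      exact this
    rw [div_eq_zero_iff] at h'
    rcases h' with h' | h'
    · have h2 : (c1 * E - c2 * E⁻¹) * E = 0 * E := by rw [h']
      rw [zero_mul] at h2
      have h3 : c1 * E * E - c2 = 0 := by
        have hc : E⁻¹ * E = 1 := inv_mul_cancel₀ hEne
        linear_combination h2 + c2 * hc
      linear_combination -h3
    · exact absurd h' hκne2
  have heq2 : d1 = d2 * E^2 := by
    have h' : (d1 * E⁻¹ - d2 * E)/(2*κ) = 0 := by
      have := hGa
      simp only [hGdef] at this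
      rw [hEexp] at this
      rw [show -(κ*(-a)) = κ*a by ring] at this
      rw [← hEdef] at this
      exact this
    rw [div_eq_zero_iff] at h'
    rcases h' with h' | h'
    · have h2 : (d1 * E⁻¹ - d2 * E) * E = 0 * E := by rw [h']
      rw [zero_mul] at h2
      have hc : E⁻¹ * E = 1 := inv_mul_cancel₀ hEne
      have h3 : d1 - d2 * E * E = 0 := by
        linear_combination h2 - d1 * hc
      linear_combination h3
    · exact absurd h' hκne2
  -- Eq3 : c1 - c2 = d1 - d2
  have heq3 : c1 - c2 = d1 - d2 := by
    have h0 : F 0 = G 0 := by rw [← hF0, hG0]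
    simp only [hFdef, hGdef, mul_zero, neg_zero, Real.exp_zero, mul_one] at h0
    rw [div_eq_div_iff hκne2 hκne2] at h0
    have hκne : κ ≠ 0 := ne_of_gt hκ
    field_simp at h0
    linarith [h0]
  -- d2 = -c1
  have hd2c1 : d2 = -c1 := by
    have hE2 : 1 < E^2 := by nlinarith
    have h2 : (c1 + d2) * (1 - E^2) = 0 := by
      rw [heq1, heq2] at heq3
      linear_combination heq3
    rcases mul_eq_zero.mp h2 with h' | h'
    · linarith
    · exfalso; nlinarith
  -- c1 ≠ 0
  have hc1ne : c1 ≠ 0 := by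
    intro hc1
    have hc2 : c2 = 0 := by rw [heq1, hc1]; ring
    have hd2 : d2 = 0 := by rw [hd2c1, hc1]; ring
    have hd1 : d1 = 0 := by rw [heq2, hd2]; ring
    have hF0' : ∀ x, F x = 0 := by
      intro x; simp [hFdef, hc1, hc2]
    have hG0' : ∀ x, G x = 0 := by
      intro x; simp [hGdef, hd1, hd2]
    have : f x0 = 0 := by
      rcases le_or_gt x0 0 with hx | hx
      · rw [hGIcc x0 ⟨hx0.1, hx⟩, hG0']
      · rw [hFIcc x0 ⟨le_of_lt hx, hx0.2⟩, hF0']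
    exact hfx0 this
  -- key equation
  have hkey : 2*κ*(1+E^2) = β*(E^2-1) := by
    have hj := hjump
    rw [hdpval, hdmval, hF0] at hj
    simp only [hFdef, mul_zero, neg_zero, Real.exp_zero, mul_one] at hj
    rw [heq1, heq2, hd2c1] at hj
    -- hj : (c1 + c1*E^2)/2 - (-c1*E^2 + -c1)/2 = -(β*((c1 - c1*E^2)/(2*κ)))
    have hj2 : c1 * (2*κ*(1+E^2)) = c1 * (β*(E^2-1)) := by
      have h4 := congrArg (fun t : ℝ => t * (2*κ)) hj
      have hκne : κ ≠ 0 := ne_of_gt hκ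
      field_simp at h4
      have hj3 : (c1 * (2*κ*(1+E^2))) * (4*κ) = (c1 * (β*(E^2-1))) * (4*κ) := by
        linear_combination (4*c1*κ) * h4
      exact mul_right_cancel₀ (by positivity : (4*κ) ≠ 0) hj3
    exact mul_left_cancel₀ hc1ne hj2
  -- convert to sinh/cosh
  have hsinh : Real.sinh (κ*a) = (E - E⁻¹)/2 := by
    rw [Real.sinh_eq, hEinv, ← hEdef]
  have hcosh : Real.cosh (κ*a) = (E + E⁻¹)/2 := by
    rw [Real.cosh_eq, hEinv, ← hEdef]
  rw [hsinh, hcosh]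
  have hc : E⁻¹ * E = 1 := inv_mul_cancel₀ hEne
  have h5 : β*(E - E⁻¹)*E = 2*κ*(E+E⁻¹)*E := by
    linear_combination (-1 : ℝ) * hkey - (β + 2*κ) * hc
  have h6 : β*(E - E⁻¹) = 2*κ*(E+E⁻¹) := mul_right_cancel₀ hEne h5
  linear_combination (1/2 : ℝ) * h6

lemma root_iff_rho {a β κ : ℝ} (hβ : 0 < β) :
    (β * Real.sinh (κ*a) = 2*κ*Real.cosh (κ*a)) ↔ rho a β κ = 0 := by
  have hc : (0:ℝ) < Real.cosh (a*κ) := Real.cosh_pos _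
  rw [rho, mul_comm a κ, sub_eq_zero, div_eq_div_iff (by rw [mul_comm a κ] at hc; exact ne_of_gt hc) (ne_of_gt hβ)]
  constructor
  · intro h; linear_combination h
  · intro h; linear_combination h

/-- For βa > 8/3 the operator T⁺ has exactly one negative eigenvalue ζ and
-β²/4 < ζ < -β²/4 + 2β² exp(-βa/2). -/
theorem dirichlet_delta_unique_negative_eigenvalue (a β : ℝ)
    (ha : 0 < a) (hβ : 0 < β) (hβa : 8 / 3 < β * a) :
    (∃! ζ : ℝ, ζ < 0 ∧ IsDirichletDeltaEigenvalue a β ζ) ∧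
    ∀ ζ : ℝ, ζ < 0 → IsDirichletDeltaEigenvalue a β ζ →
      -β ^ 2 / 4 < ζ ∧ ζ < -β ^ 2 / 4 + 2 * β ^ 2 * Real.exp (-(β * a) / 2) := by
  obtain ⟨κs, hκsmem, hκsrho⟩ := rho_root_exists ha hβ hβa
  have hκspos : 0 < κs := lt_trans (by positivity) hκsmem.1
  have hroot_s : β * Real.sinh (κs*a) = 2*κs*Real.cosh (κs*a) := (root_iff_rho hβ).mpr hκsrho
  have heig : IsDirichletDeltaEigenvalue a β (-κs^2) := eig_of_root ha hκspos hroot_s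
  have hneg : -κs^2 < 0 := by nlinarith
  have huniq : ∀ ζ : ℝ, ζ < 0 → IsDirichletDeltaEigenvalue a β ζ → ζ = -κs^2 := by
    intro ζ hζ hev
    have hroot := root_of_eig ha hβ hζ hev
    have hκpos : 0 < Real.sqrt (-ζ) := Real.sqrt_pos.mpr (by linarith)
    have hrho : rho a β (Real.sqrt (-ζ)) = 0 := (root_iff_rho hβ).mp hroot
    have hEq := rho_root_unique ha hβ hκpos hκspos hrho hκsrho
    have hsq : (Real.sqrt (-ζ))^2 = -ζ := Real.sq_sqrt (by linarith)
    rw [← hEq]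
    linarith [hsq]
  constructor
  · exact ⟨-κs^2, ⟨hneg, heig⟩, fun ζ hζ => huniq ζ hζ.1 hζ.2⟩
  · intro ζ hζ hev
    rw [huniq ζ hζ hev]
    constructor
    · have h2 : κs < β/2 := hκsmem.2
      nlinarith
    · set W := Real.exp (-(β*a)/2) with hWdef
      have hWpos : 0 < W := Real.exp_pos _
      have hWhalf : W < 1/2 := by
        have h1 : Real.exp (4/3) < Real.exp (β*a/2) := Real.exp_lt_exp.mpr (by linarith)
        have h2 : (2:ℝ) < Real.exp (β*a/2) := by linarith [exp_43_gt_3]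
        have h3 : W * Real.exp (β*a/2) = 1 := by
          rw [hWdef, ← Real.exp_add]; ring_nf; exact Real.exp_zero
        nlinarith
      set t := κs * a with htdef
      have hupos : 0 < Real.exp t := Real.exp_pos _
      have hvpos : 0 < Real.exp (-t) := Real.exp_pos _
      have huv : Real.exp t * Real.exp (-t) = 1 := by rw [← Real.exp_add]; simp
      have hroot' : β * ((Real.exp t - Real.exp (-t))/2)
          = 2*κs*((Real.exp t + Real.exp (-t))/2) := by
        rw [← Real.sinh_eq, ← Real.cosh_eq]; exact hroot_s
      have hfac : (2*κs - β + 2*β*(Real.exp (-t))^2) * (Real.exp t + Real.exp (-t))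
          = 2*β*(Real.exp (-t))^3 := by
        linear_combination (-2 : ℝ)*hroot' + 2*β*(Real.exp (-t))*huv
      have hpos3 : 0 < 2*β*(Real.exp (-t))^3 := by positivity
      have hstep : 0 < 2*κs - β + 2*β*(Real.exp (-t))^2 := by
        by_contra hcon
        push_neg at hcon
        nlinarith [hfac, hpos3, hupos, hvpos]
      have hvW : (Real.exp (-t))^2 < W := by
        have h1 : (Real.exp (-t))^2 = Real.exp (-2*t) := by
          rw [sq, ← Real.exp_add]; ring_nf
        rw [h1, hWdef]
        exact Real.exp_lt_exp.mpr (by nlinarith [hκsmem.1])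
      have hκgt : κs > β/2 - β*W := by nlinarith [hstep, hvW, hβ]
      have hcpos : 0 < β/2 - β*W := by nlinarith [hWhalf, hβ]
      have hsq2 : (β/2 - β*W)*(β/2 - β*W) < κs*κs :=
        mul_self_lt_mul_self (le_of_lt hcpos) hκgt
      nlinarith [hsq2, hWpos, hβ, mul_pos hβ hWpos, mul_pos (mul_pos hβ hβ) hWpos]
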